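/- Let a : ℝ^N → ℝ be bounded continuous, symmetric (a(x) = a(−x)) and such that t ↦ a(tx) is non-increasing on (0,∞) for every x ∈ ℝ^N. Let J be a nonnegative continuous unit-mass kernel on ℝ^N and define (M_{σ,0}φ)(x) = σ^{−N} ∫_{ℝ^N} J((x−y)/σ) φ(y) dy − φ(x). Then the map σ ↦ λ_p(M_{σ,0} + a) is monotone non-decreasing on (0,∞). -/

import Mathlib

/-!
Rescaling space by `c = σ₁ / σ₂ ≤ 1` turns a positive supersolution `φ` for dispersal range `σ₁`
into the positive supersolution `φ (c • ·)` for range `σ₂`: the dilation conjugates the two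
nonlocal operators, and the zeroth-order term only improves since `a x ≤ a (c • x)`. Hence the set
of admissible `λ` grows with `σ`, and so does its supremum.
-/

open MeasureTheory Filter Metric Set
open scoped Topology

noncomputable section

/-- Principal eigenvalue admissible set for
`M_{σ,0} φ (x) = σ^{-N} ∫_{ℝ^N} J((x−y)/σ) φ(y) dy − φ(x)` plus `a`. -/
def lamSet0 (N : ℕ) (σ : ℝ) (J : EuclideanSpace ℝ (Fin N) → ℝ)
    (a : EuclideanSpace ℝ (Fin N) → ℝ) : Set ℝ :=
  {l | ∃ φ : EuclideanSpace ℝ (Fin N) → ℝ, Continuous φ ∧ (∀ x, 0 < φ x) ∧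
    ∀ x, ((σ ^ N)⁻¹ * (∫ y, J (σ⁻¹ • (x - y)) * φ y) - φ x) + (a x + l) * φ x ≤ 0}

open Module

section Dilation

variable {E : Type*} [NormedAddCommGroup E] [NormedSpace ℝ E] [MeasurableSpace E] (μ : Measure E)

/-- The nonlocal part `φ ↦ σ^{-d} ∫ J((x - y)/σ) φ(y) dy` of `M_{σ,0}`. -/
def dilatedConv (σ : ℝ) (J φ : E → ℝ) (x : E) : ℝ :=
  (σ ^ finrank ℝ E)⁻¹ * ∫ y, J (σ⁻¹ • (x - y)) * φ y ∂μ

/-- The `λ` for which `M_{σ,0} + a + λ` has a positive continuous supersolution;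
`λ_p(M_{σ,0} + a)` is its supremum. -/
def admissibleEigenvalues (σ : ℝ) (J a : E → ℝ) : Set ℝ :=
  {l | ∃ φ : E → ℝ, Continuous φ ∧ (∀ x, 0 < φ x) ∧
    ∀ x, dilatedConv μ σ J φ x - φ x + (a x + l) * φ x ≤ 0}

variable {μ}

lemma dilatedConv_nonneg {σ : ℝ} (hσ : 0 ≤ σ) {J φ : E → ℝ} (hJ : ∀ z, 0 ≤ J z)
    (hφ : ∀ y, 0 ≤ φ y) (x : E) : 0 ≤ dilatedConv μ σ J φ x :=
  mul_nonneg (inv_nonneg.2 (pow_nonneg hσ _))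
    (integral_nonneg fun y => mul_nonneg (hJ _) (hφ y))

lemma admissibleEigenvalues_bddAbove {σ : ℝ} (hσ : 0 ≤ σ) {J : E → ℝ} (hJ : ∀ z, 0 ≤ J z)
    (a : E → ℝ) : BddAbove (admissibleEigenvalues μ σ J a) := by
  refine ⟨1 - a 0, fun l ⟨φ, _, hφ, hsuper⟩ => ?_⟩
  have hconv := dilatedConv_nonneg (μ := μ) hσ hJ (fun y => (hφ y).le) 0
  have : (a 0 + l) * φ 0 ≤ 1 * φ 0 := by linarith [hsuper 0]
  linarith [le_of_mul_le_mul_right this (hφ 0)]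

variable [FiniteDimensional ℝ E] [BorelSpace E] [μ.IsAddHaarMeasure]

lemma dilatedConv_one {σ : ℝ} (hσ : 0 < σ) (J : E → ℝ) (x : E) :
    dilatedConv μ σ J 1 x = ∫ z, J z ∂μ := by
  have hpow : σ ^ finrank ℝ E ≠ 0 := pow_ne_zero _ hσ.ne'
  simp only [dilatedConv, Pi.one_apply, mul_one]
  rw [integral_sub_left_eq_self (fun y => J (σ⁻¹ • y)) μ x,
    Measure.integral_comp_inv_smul_of_nonneg μ J hσ.le, smul_eq_mul, inv_mul_cancel_left₀ hpow]

lemma dilatedConv_comp_smul {c σ : ℝ} (hc : 0 < c) (hσ : 0 < σ) (J φ : E → ℝ) (x : E) :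
    dilatedConv μ σ J (fun y => φ (c • y)) x = dilatedConv μ (c * σ) J φ (c • x) := by
  have hcancel : (c * σ)⁻¹ * c = σ⁻¹ := by field_simp
  have hscale : ∀ y : E, (c * σ)⁻¹ • (c • x - c • y) = σ⁻¹ • (x - y) := fun y => by
    rw [← smul_sub, smul_smul, hcancel]
  have hint : ∫ y, J (σ⁻¹ • (x - y)) * φ (c • y) ∂μ
      = (c ^ finrank ℝ E)⁻¹ * ∫ u, J ((c * σ)⁻¹ • (c • x - u)) * φ u ∂μ := by
    simp_rw [← hscale]
    exact Measure.integral_comp_smul_of_nonneg μ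
      (fun u => J ((c * σ)⁻¹ • (c • x - u)) * φ u) c (hR := hc.le)
  rw [dilatedConv, dilatedConv, hint, ← mul_assoc, ← mul_inv, ← mul_pow, mul_comm σ]

lemma neg_mem_admissibleEigenvalues {σ : ℝ} (hσ : 0 < σ) {J : E → ℝ} (hJ1 : ∫ z, J z ∂μ = 1)
    {a : E → ℝ} {M : ℝ} (haM : ∀ x, a x ≤ M) : -M ∈ admissibleEigenvalues μ σ J a := by
  refine ⟨1, continuous_const, fun _ => one_pos, fun x => ?_⟩
  simp only [dilatedConv_one hσ, hJ1, Pi.one_apply, mul_one]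
  linarith [haM x]

lemma admissibleEigenvalues_mono {J a : E → ℝ}
    (hmono : ∀ (x : E) (t₁ t₂ : ℝ), 0 < t₁ → t₁ ≤ t₂ → a (t₂ • x) ≤ a (t₁ • x))
    {σ₁ σ₂ : ℝ} (hσ₁ : 0 < σ₁) (hσ₁₂ : σ₁ ≤ σ₂) :
    admissibleEigenvalues μ σ₁ J a ⊆ admissibleEigenvalues μ σ₂ J a := by
  rintro l ⟨φ, hcont, hφ, hsuper⟩
  have hσ₂ : 0 < σ₂ := hσ₁.trans_le hσ₁₂
  set c := σ₁ / σ₂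
  have hc : 0 < c := div_pos hσ₁ hσ₂
  have hcσ : c * σ₂ = σ₁ := div_mul_cancel₀ σ₁ hσ₂.ne'
  refine ⟨fun y => φ (c • y), hcont.comp (continuous_const_smul c), fun _ => hφ _, fun x => ?_⟩
  have ha : a x ≤ a (c • x) := by
    simpa only [one_smul] using hmono x c 1 hc ((div_le_one hσ₂).2 hσ₁₂)
  rw [dilatedConv_comp_smul hc hσ₂, hcσ]
  nlinarith [hsuper (c • x), hφ (c • x)]

end Dilation

lemma lamSet0_eq_admissibleEigenvalues (N : ℕ) (σ : ℝ) (J a : EuclideanSpace ℝ (Fin N) → ℝ) :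
    lamSet0 N σ J a = admissibleEigenvalues volume σ J a := by
  simp only [lamSet0, admissibleEigenvalues, dilatedConv, finrank_euclideanSpace_fin]

theorem stmt14_general (N : ℕ)
    (J : EuclideanSpace ℝ (Fin N) → ℝ)
    (hJ0 : ∀ z, 0 ≤ J z)
    (hJ1 : ∫ z, J z = 1)
    (a : EuclideanSpace ℝ (Fin N) → ℝ)
    (haB : ∃ M, ∀ x, |a x| ≤ M)
    (hmono : ∀ (x : EuclideanSpace ℝ (Fin N)) (t₁ t₂ : ℝ),
      0 < t₁ → t₁ ≤ t₂ → a (t₂ • x) ≤ a (t₁ • x)) :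
    ∀ σ₁ σ₂ : ℝ, 0 < σ₁ → σ₁ ≤ σ₂ →
      sSup (lamSet0 N σ₁ J a) ≤ sSup (lamSet0 N σ₂ J a) := by
  intro σ₁ σ₂ hσ₁ hσ₁₂
  obtain ⟨M, haM⟩ := haB
  rw [lamSet0_eq_admissibleEigenvalues, lamSet0_eq_admissibleEigenvalues]
  exact csSup_le_csSup (admissibleEigenvalues_bddAbove (hσ₁.le.trans hσ₁₂) hJ0 a)
    ⟨-M, neg_mem_admissibleEigenvalues hσ₁ hJ1 fun x => (le_abs_self _).trans (haM x)⟩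
    (admissibleEigenvalues_mono hmono hσ₁ hσ₁₂)

/-- If `a` is bounded continuous, symmetric and radially non-increasing,
then `σ ↦ λ_p(M_{σ,0} + a)` is monotone non-decreasing on `(0,∞)`. -/
theorem stmt14 (N : ℕ)
    (J : EuclideanSpace ℝ (Fin N) → ℝ)
    (hJc : Continuous J) (hJ0 : ∀ z, 0 ≤ J z)
    (hJi : Integrable J) (hJ1 : ∫ z, J z = 1)
    (a : EuclideanSpace ℝ (Fin N) → ℝ)
    (hac : Continuous a) (haB : ∃ M, ∀ x, |a x| ≤ M)
    (hsymm : ∀ x, a (-x) = a x)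
    (hmono : ∀ (x : EuclideanSpace ℝ (Fin N)) (t₁ t₂ : ℝ),
      0 < t₁ → t₁ ≤ t₂ → a (t₂ • x) ≤ a (t₁ • x)) :
    ∀ σ₁ σ₂ : ℝ, 0 < σ₁ → σ₁ ≤ σ₂ →
      sSup (lamSet0 N σ₁ J a) ≤ sSup (lamSet0 N σ₂ J a) :=
  stmt14_general N J hJ0 hJ1 a haB hmono
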